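/- arXiv:2207.06596 — 5 statements merged into one kernel-verified Lean document; each statement's English description precedes it below -/
import Mathlib

section
/- Let n and d be positive integers and Δ > 0 a real number with 2Δ/n < 1 − cos(π/(2d)). Consider the real polynomial p(x) = x·(x − 1/n)·(x − 2/n)·T_d(1 − Δ·x). Then p has degree d + 3 and exactly d + 3 pairwise distinct real roots, namely 0, 1/n, 2/n together with r_m := (1/Δ)·(1 − cos((2m−1)π/(2d))) for m = 1, …, d; moreover 2/n < r₁ < r₂ < ⋯ < r_d. -/
/-! The zeros of `T_d` are the Chebyshev nodes `cos ((2m - 1)π / (2d))`, `1 ≤ m ≤ d`, so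
`T_d(1 - Δx)` vanishes exactly at the points `r_m`. These increase with `m` because `cos` is
decreasing on `[0, π]`, and the gap hypothesis says precisely that `2/n < r_1`. -/

open Polynomial

open Real in
theorem Polynomial.Chebyshev.eval_T_real_eq_zero_iff (d : ℕ) (y : ℝ) :
    (T ℝ d).eval y = 0 ↔
      ∃ m : ℕ, 1 ≤ m ∧ m ≤ d ∧ y = cos ((2 * (m : ℝ) - 1) * π / (2 * d)) := by
  rw [← IsRoot.def, ← mem_roots (T_ne_zero ℝ d), roots_T_real,
    Finset.mem_val, Finset.mem_image]
  constructor
  · rintro ⟨k, hk, rfl⟩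
    refine ⟨k + 1, by omega, Finset.mem_range.mp hk, ?_⟩
    push_cast
    ring_nf
  · rintro ⟨m, hm, hmd, rfl⟩
    refine ⟨m - 1, Finset.mem_range.mpr (by omega), ?_⟩
    rw [Nat.cast_pred hm]
    ring_nf

theorem Polynomial.natDegree_comp_C_sub_C_mul_X {R : Type*} [CommRing R] [NoZeroDivisors R]
    (p : R[X]) (a : R) {b : R} (hb : b ≠ 0) : (p.comp (C a - C b * X)).natDegree = p.natDegree := by
  have hlin : C a - C b * X = C (-b) * X + C a := by rw [C_neg]; ring
  rw [natDegree_comp, hlin, natDegree_linear (neg_ne_zero.mpr hb), mul_one]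

open Real in
theorem strictAntiOn_cos_two_mul_sub_one_mul_pi_div (d : ℕ) :
    StrictAntiOn (fun m : ℕ ↦ cos ((2 * (m : ℝ) - 1) * π / (2 * d))) (Set.Icc 1 d) := by
  intro a ⟨ha, had⟩ b ⟨hb, hbd⟩ hab
  have hangle : ∀ m : ℕ, 1 ≤ m → m ≤ d → (2 * (m : ℝ) - 1) * π / (2 * d) ∈ Set.Icc 0 π := by
    intro m hm hmd
    have hm' : (1 : ℝ) ≤ m := by exact_mod_cast hm
    have hmd' : (m : ℝ) ≤ d := by exact_mod_cast hmd
    refine ⟨div_nonneg (mul_nonneg (by linarith) pi_pos.le) (by positivity), ?_⟩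
    rw [div_le_iff₀ (by linarith)]
    nlinarith [pi_pos]
  have hd : (0 : ℝ) < d := by exact_mod_cast ha.trans had
  refine strictAntiOn_cos (hangle a ha had) (hangle b hb hbd) ?_
  gcongr

theorem chebyshev_construction_roots_general (n d : ℕ)
    (Δ : ℝ) (hΔ : 0 < Δ)
    (hgap : 2 * Δ / n < 1 - Real.cos (Real.pi / (2 * d)))
    (p : Polynomial ℝ)
    (hp : p = X * (X - C (1 / (n : ℝ))) * (X - C (2 / (n : ℝ))) *
        ((Polynomial.Chebyshev.T ℝ d).comp (C 1 - C Δ * X)))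
    (r : ℕ → ℝ)
    (hr : ∀ m : ℕ, r m = (1 / Δ) * (1 - Real.cos ((2 * (m : ℝ) - 1) * Real.pi / (2 * d)))) :
    p.natDegree = d + 3 ∧
    (∀ x : ℝ, p.eval x = 0 ↔
      (x = 0 ∨ x = 1 / n ∨ x = 2 / n ∨ ∃ m : ℕ, 1 ≤ m ∧ m ≤ d ∧ x = r m)) ∧
    2 / (n : ℝ) < r 1 ∧
    (∀ m : ℕ, 1 ≤ m → m < d → r m < r (m + 1)) := by
  have hr_iff (m : ℕ) (x : ℝ) :
      x = r m ↔ 1 - Δ * x = Real.cos ((2 * (m : ℝ) - 1) * Real.pi / (2 * d)) := by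
    rw [hr, one_div, ← div_eq_inv_mul, eq_div_iff hΔ.ne']
    constructor <;> intro h <;> linarith
  have hr_mono : StrictMonoOn r (Set.Icc 1 d) := fun a ha b hb hab => by
    rw [hr, hr]
    gcongr
    exact strictAntiOn_cos_two_mul_sub_one_mul_pi_div d ha hb hab
  refine ⟨?_, fun x => ?_, ?_, fun m hm hmd => ?_⟩
  · have hcubic : (X * (X - C (1 / (n : ℝ))) * (X - C (2 / (n : ℝ)))).natDegree = 3 := by
      compute_degree!
    -- its value at `0` is `T_d(1) = 1`
    have hq : (Chebyshev.T ℝ d).comp (C 1 - C Δ * X) ≠ 0 := fun h => by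
      simpa using congrArg (eval 0) h
    rw [hp, ((monic_X.mul (monic_X_sub_C _)).mul (monic_X_sub_C _)).natDegree_mul' hq, hcubic,
      natDegree_comp_C_sub_C_mul_X _ _ hΔ.ne', Chebyshev.natDegree_T, Int.natAbs_natCast, add_comm]
  · simp only [hp, eval_mul, eval_sub, eval_X, eval_C, eval_comp, mul_eq_zero, sub_eq_zero,
      Chebyshev.eval_T_real_eq_zero_iff, hr_iff]
    tauto
  · calc 2 / (n : ℝ) = (1 / Δ) * (2 * Δ / n) := by field_simp
      _ < (1 / Δ) * (1 - Real.cos (Real.pi / (2 * d))) := by gcongr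
      _ = r 1 := by rw [hr]; norm_num
  · exact hr_mono ⟨hm, hmd.le⟩ ⟨by omega, hmd⟩ (Nat.lt_succ_self m)

/-- For positive integers `n, d` and a real `Δ > 0` with
`2Δ/n < 1 - cos(π/(2d))`, the polynomial `p(x) = x (x - 1/n)(x - 2/n) T_d(1 - Δ x)`
has degree `d + 3` and exactly `d + 3` pairwise distinct real roots, namely
`0, 1/n, 2/n` and `r_m = (1/Δ)(1 - cos((2m-1)π/(2d)))` for `1 ≤ m ≤ d`, with
`2/n < r_1 < r_2 < ⋯ < r_d`. -/
theorem chebyshev_construction_roots (n d : ℕ) (hn : 0 < n) (hd : 0 < d)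
    (Δ : ℝ) (hΔ : 0 < Δ)
    (hgap : 2 * Δ / n < 1 - Real.cos (Real.pi / (2 * d)))
    (p : Polynomial ℝ)
    (hp : p = X * (X - C (1 / (n : ℝ))) * (X - C (2 / (n : ℝ))) *
        ((Polynomial.Chebyshev.T ℝ d).comp (C 1 - C Δ * X)))
    (r : ℕ → ℝ)
    (hr : ∀ m : ℕ, r m = (1 / Δ) * (1 - Real.cos ((2 * (m : ℝ) - 1) * Real.pi / (2 * d)))) :
    p.natDegree = d + 3 ∧
    (∀ x : ℝ, p.eval x = 0 ↔
      (x = 0 ∨ x = 1 / n ∨ x = 2 / n ∨ ∃ m : ℕ, 1 ≤ m ∧ m ≤ d ∧ x = r m)) ∧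
    2 / (n : ℝ) < r 1 ∧
    (∀ m : ℕ, 1 ≤ m → m < d → r m < r (m + 1)) :=
  chebyshev_construction_roots_general n d Δ hΔ hgap p hp r hr
end

section
/- Let p be a probability distribution on [n] that is a k-histogram, let q : [n] → (0,∞), let ε > 0, and let I₁, …, I_K be a partition of [n] into K consecutive intervals. For each ℓ, let j_ℓ denote the minimal number of consecutive subintervals into which I_ℓ can be partitioned so that p is constant on each subinterval. Suppose G ⊆ {1,…,K} is a set of indices such that for every ℓ ∈ G the interval I_ℓ is not ε-bad, i.e., χ²_{I_ℓ}(p‖q) < j_ℓ·ε²/K. Then ∑_{ℓ∈G} χ²_{I_ℓ}(p‖q) < (K + k)·ε²/K. -/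
/-!
Inside an interval `I_ℓ`, `p` is constant between consecutive breakpoints of the global
histogram, so `j_ℓ ≤ 1 + #(breakpoints strictly inside I_ℓ)` by minimality. The intervals are
disjoint and a `k`-histogram has at most `k - 1` interior breakpoints, whence
`∑_{ℓ ∈ G} j_ℓ ≤ |G| + k - 1 < K + k`; summing `χ²_{I_ℓ} < j_ℓ ε²/K` over `G` concludes.
-/

/-- `p` is `j`-piecewise constant on the integer interval `[a, b)`: there are breakpoints
`a = f 0 < f 1 < ⋯ < f j = b` such that `p` is constant on each `[f i, f (i+1))`. -/
def PiecewiseConstOn (p : ℕ → ℝ) (a b : ℕ) (j : ℕ) : Prop :=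
  ∃ f : Fin (j + 1) → ℕ, StrictMono f ∧ f 0 = a ∧ f (Fin.last j) = b ∧
    ∀ i : Fin j, ∀ x ∈ Finset.Ico (f i.castSucc) (f i.succ),
      ∀ y ∈ Finset.Ico (f i.castSucc) (f i.succ), p x = p y

/-- `p` is a `k`-histogram on `[n] = {1, …, n}`: the domain can be partitioned into at
most `k` consecutive intervals on each of which `p` is constant. -/
def IsKHistogram (p : ℕ → ℝ) (n k : ℕ) : Prop :=
  ∃ j : ℕ, 1 ≤ j ∧ j ≤ k ∧ PiecewiseConstOn p 1 (n + 1) j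

/-- Restricted chi-squared divergence `χ²_S(p‖q) = ∑_{i ∈ S} (p i - q i)² / q i`. -/
noncomputable def chiSq (S : Finset ℕ) (p q : ℕ → ℝ) : ℝ :=
  ∑ i ∈ S, (p i - q i) ^ 2 / q i

-- The last clause of `PiecewiseConstOn`, for a fixed breakpoint sequence `f`.
def ConstOnPieces (p : ℕ → ℝ) {J : ℕ} (f : Fin (J + 1) → ℕ) : Prop :=
  ∀ i : Fin J, ∀ x ∈ Finset.Ico (f i.castSucc) (f i.succ),
    ∀ y ∈ Finset.Ico (f i.castSucc) (f i.succ), p x = p y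

open Finset

theorem Fin.exists_castSucc_le_lt_succ {α : Type*} [LinearOrder α] :
    ∀ {J : ℕ} (f : Fin (J + 1) → α) {x : α}, f 0 ≤ x → x < f (Fin.last J) →
      ∃ i : Fin J, f i.castSucc ≤ x ∧ x < f i.succ
  | 0, _, _, h0, hlast => absurd hlast (not_lt.mpr h0)
  | J + 1, f, x, h0, hlast => by
    by_cases hx : x < f (Fin.last J).castSucc
    · obtain ⟨i, hi⟩ := exists_castSucc_le_lt_succ (f ∘ Fin.castSucc) h0 hx
      exact ⟨i.castSucc, hi⟩
    · exact ⟨Fin.last J, not_lt.mp hx, hlast⟩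

theorem PiecewiseConstOn.of_finset {p : ℕ → ℝ} {a b m : ℕ} (S : Finset ℕ) (hS : #S = m + 1)
    (ha : a ∈ S) (hb : b ∈ S) (hSab : ∀ z ∈ S, a ≤ z ∧ z ≤ b)
    (hp : ∀ x y, a ≤ x → x ≤ y → y < b → (∀ z ∈ S, z ∉ Set.Ioc x y) → p x = p y) :
    PiecewiseConstOn p a b m := by
  set g := S.orderEmbOfFin hS
  have hg_surj : ∀ z ∈ S, ∃ s, g s = z := fun z hz => by
    rw [← Set.mem_range, S.range_orderEmbOfFin hS]; exact hz
  have hg_mem : ∀ s, a ≤ g s ∧ g s ≤ b := fun s => hSab _ (S.orderEmbOfFin_mem hS s)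
  refine ⟨g, g.strictMono, ?_, ?_, ?_⟩
  · obtain ⟨s, rfl⟩ := hg_surj a ha
    exact le_antisymm (g.monotone (Fin.zero_le s)) (hg_mem 0).1
  · obtain ⟨s, rfl⟩ := hg_surj b hb
    exact le_antisymm (hg_mem _).2 (g.monotone (Fin.le_last s))
  have hgap : ∀ (i : Fin m) z, g i.castSucc < z → z < g i.succ → z ∉ S := fun i z h1 h2 hz => by
    obtain ⟨s, rfl⟩ := hg_surj z hz
    have := Fin.castSucc_lt_iff_succ_le.mp (g.lt_iff_lt.mp h1)
    exact (g.le_iff_le.mpr this).not_gt h2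
  have key : ∀ (i : Fin m) x y, x ∈ Ico (g i.castSucc) (g i.succ) →
      y ∈ Ico (g i.castSucc) (g i.succ) → x ≤ y → p x = p y := fun i x y hx hy hxy => by
    rw [mem_Ico] at hx hy
    refine hp x y ((hg_mem _).1.trans hx.1) hxy (hy.2.trans_le (hg_mem _).2) fun z hz hzxy => ?_
    exact hgap i z (hx.1.trans_lt hzxy.1) (hzxy.2.trans_lt hy.2) hz
  intro i x hx y hy
  rcases le_total x y with hxy | hyx
  · exact key i x y hx hy hxy
  · exact (key i y x hy hx hyx).symm

namespace ConstOnPieces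

variable {p : ℕ → ℝ} {J : ℕ} {f : Fin (J + 1) → ℕ}

theorem eq_of_forall_notMem_Ioc (hp : ConstOnPieces p f) {x y : ℕ} (h0 : f 0 ≤ x) (hxy : x ≤ y)
    (hlast : y < f (Fin.last J)) (hbreak : ∀ t, f t ∉ Set.Ioc x y) : p x = p y := by
  obtain ⟨i, hix, hxi⟩ := Fin.exists_castSucc_le_lt_succ f h0 (hxy.trans_lt hlast)
  have hyi : y < f i.succ := not_le.mp fun h => hbreak i.succ ⟨hxi, h⟩
  exact hp i x (mem_Ico.mpr ⟨hix, hxi⟩) y (mem_Ico.mpr ⟨hix.trans hxy, hyi⟩)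

/-- Cutting `[a, b)` at the breakpoints of `f` that fall inside it. -/
theorem piecewiseConstOn_Ico (hp : ConstOnPieces p f) {a b : ℕ} (ha : f 0 ≤ a) (hab : a < b)
    (hb : b ≤ f (Fin.last J)) :
    PiecewiseConstOn p a b (#(image f univ ∩ Ioo a b) + 1) := by
  set B := image f univ ∩ Ioo a b
  have hcard : #(insert a (insert b B)) = #B + 1 + 1 := by
    rw [card_insert_of_notMem (by simp [B, hab.ne]), card_insert_of_notMem (by simp [B])]
  refine .of_finset _ hcard (mem_insert_self _ _) (mem_insert_of_mem (mem_insert_self _ _))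
    ?_ fun x y hax hxy hyb hS => hp.eq_of_forall_notMem_Ioc (ha.trans hax) hxy
      (hyb.trans_le hb) fun t ht => hS (f t) ?_ ht
  · intro z hz
    simp only [B, mem_insert, mem_inter, mem_Ioo] at hz
    omega
  · simp only [B, mem_insert, mem_inter, mem_image, mem_univ, true_and, mem_Ioo]
    exact .inr (.inr ⟨⟨t, rfl⟩, hax.trans_lt ht.1, ht.2.trans_lt hyb⟩)

end ConstOnPieces

theorem sum_card_inter_Ioo_le {K : ℕ} {e : Fin (K + 1) → ℕ} (he : Monotone e) (B : Finset ℕ)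
    (G : Finset (Fin K)) :
    ∑ ℓ ∈ G, #(B ∩ Ioo (e ℓ.castSucc) (e ℓ.succ)) ≤ #(B ∩ Ioo (e 0) (e (Fin.last K))) := by
  have hdisj : Pairwise fun ℓ ℓ' : Fin K =>
      Disjoint (B ∩ Ioo (e ℓ.castSucc) (e ℓ.succ)) (B ∩ Ioo (e ℓ'.castSucc) (e ℓ'.succ)) := by
    intro ℓ ℓ' hne
    wlog hlt : ℓ < ℓ' generalizing ℓ ℓ'
    · exact (this hne.symm (lt_of_le_of_ne (not_lt.mp hlt) hne.symm)).symm
    have : e ℓ.succ ≤ e ℓ'.castSucc := he (Fin.succ_le_castSucc_iff.mpr hlt)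
    refine disjoint_left.mpr fun z hz hz' => ?_
    simp only [mem_inter, mem_Ioo] at hz hz'
    omega
  rw [← card_biUnion (hdisj.set_pairwise _)]
  refine card_le_card fun z hz => ?_
  obtain ⟨ℓ, -, hz⟩ := mem_biUnion.mp hz
  simp only [mem_inter, mem_Ioo] at hz ⊢
  exact ⟨hz.1, (he (Fin.zero_le _)).trans_lt hz.2.1, hz.2.2.trans_le (he (Fin.le_last _))⟩

theorem StrictMono.card_image_inter_Ioo {J : ℕ} {f : Fin (J + 1) → ℕ} (hf : StrictMono f) :
    #(image f univ ∩ Ioo (f 0) (f (Fin.last J))) = J - 1 := by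
  have : image f univ ∩ Ioo (f 0) (f (Fin.last J)) = image f (Ioo 0 (Fin.last J)) := by
    ext z
    simp only [mem_inter, mem_image, mem_univ, true_and, mem_Ioo]
    constructor
    · rintro ⟨⟨t, rfl⟩, h0, hlast⟩
      exact ⟨t, ⟨hf.lt_iff_lt.mp h0, hf.lt_iff_lt.mp hlast⟩, rfl⟩
    · rintro ⟨t, ⟨h0, hlast⟩, rfl⟩
      exact ⟨⟨t, rfl⟩, hf h0, hf hlast⟩
  rw [this, card_image_of_injective _ hf.injective, Fin.card_Ioo]
  simp

theorem sum_minimal_pieces_lt {p : ℕ → ℝ} {n k K : ℕ} (hhist : IsKHistogram p n k)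
    {e : Fin (K + 1) → ℕ} (he : StrictMono e) (he0 : e 0 = 1) (heK : e (Fin.last K) = n + 1)
    {j : Fin K → ℕ}
    (hj : ∀ ℓ : Fin K, ∀ j' < j ℓ, ¬ PiecewiseConstOn p (e ℓ.castSucc) (e ℓ.succ) j')
    (G : Finset (Fin K)) :
    ∑ ℓ ∈ G, j ℓ < #G + k := by
  obtain ⟨J, hJ1, hJk, f, hf, hf0, hflast, hp⟩ := hhist
  set A := fun ℓ : Fin K => image f univ ∩ Ioo (e ℓ.castSucc) (e ℓ.succ)
  have hjA : ∀ ℓ, j ℓ ≤ #(A ℓ) + 1 := fun ℓ => not_lt.mp fun hlt =>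
    hj ℓ _ hlt <| ConstOnPieces.piecewiseConstOn_Ico hp
      (hf0.trans_le (he0 ▸ he.monotone (Fin.zero_le _))) (he Fin.castSucc_lt_succ)
      (hflast ▸ heK ▸ he.monotone (Fin.le_last _))
  have hA : ∑ ℓ ∈ G, #(A ℓ) ≤ J - 1 := calc
    _ ≤ #(image f univ ∩ Ioo (e 0) (e (Fin.last K))) := sum_card_inter_Ioo_le he.monotone _ G
    _ = J - 1 := by rw [he0, heK, ← hf.card_image_inter_Ioo, hf0, hflast]
  calc ∑ ℓ ∈ G, j ℓ ≤ ∑ ℓ ∈ G, (#(A ℓ) + 1) := sum_le_sum fun ℓ _ => hjA ℓ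
    _ = ∑ ℓ ∈ G, #(A ℓ) + #G := by rw [sum_add_distrib, card_eq_sum_ones]
    _ < #G + k := by omega

theorem good_intervals_chiSq_bound_general
    (n k K : ℕ) (hK : 0 < K)
    (p q : ℕ → ℝ)
    (hhist : IsKHistogram p n k)
    (ε : ℝ) (hε : 0 < ε)
    (e : Fin (K + 1) → ℕ) (he : StrictMono e) (he0 : e 0 = 1)
    (heK : e (Fin.last K) = n + 1)
    (j : Fin K → ℕ)
    (hj : ∀ ℓ : Fin K,
      PiecewiseConstOn p (e ℓ.castSucc) (e ℓ.succ) (j ℓ) ∧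
      ∀ j' < j ℓ, ¬ PiecewiseConstOn p (e ℓ.castSucc) (e ℓ.succ) j')
    (G : Finset (Fin K))
    (hG : ∀ ℓ ∈ G, chiSq (Finset.Ico (e ℓ.castSucc) (e ℓ.succ)) p q <
        (j ℓ : ℝ) * ε ^ 2 / K) :
    ∑ ℓ ∈ G, chiSq (Finset.Ico (e ℓ.castSucc) (e ℓ.succ)) p q <
      ((K : ℝ) + k) * ε ^ 2 / K := by
  have hcount : ∑ ℓ ∈ G, j ℓ < K + k :=
    (sum_minimal_pieces_lt hhist he he0 heK (fun ℓ => (hj ℓ).2) G).trans_le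
      (by simpa using G.card_le_univ)
  calc ∑ ℓ ∈ G, chiSq (Ico (e ℓ.castSucc) (e ℓ.succ)) p q
      ≤ ∑ ℓ ∈ G, (j ℓ : ℝ) * (ε ^ 2 / K) :=
        sum_le_sum fun ℓ hℓ => by rw [← mul_div_assoc]; exact (hG ℓ hℓ).le
    _ < ((K : ℝ) + k) * (ε ^ 2 / K) := by
        rw [← sum_mul]
        gcongr
        exact_mod_cast hcount
    _ = ((K : ℝ) + k) * ε ^ 2 / K := mul_div_assoc _ _ _ |>.symm

/-- Let `p` be a `k`-histogram distribution on `[n]`, `q` positive,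
and `I_1, …, I_K` a partition of `[n]` into consecutive intervals.  If `j ℓ` is the
minimal number of consecutive subintervals into which `I_ℓ` can be partitioned so that
`p` is constant on each, and every `ℓ ∈ G` satisfies `χ²_{I_ℓ}(p‖q) < j ℓ · ε²/K`
(is not ε-bad), then `∑_{ℓ ∈ G} χ²_{I_ℓ}(p‖q) < (K + k)·ε²/K`. -/
theorem good_intervals_chiSq_bound
    (n k K : ℕ) (hn : 0 < n) (hk : 0 < k) (hK : 0 < K)
    (p q : ℕ → ℝ)
    (hp0 : ∀ i ∈ Finset.Icc 1 n, 0 ≤ p i) (hp1 : ∑ i ∈ Finset.Icc 1 n, p i = 1)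
    (hhist : IsKHistogram p n k)
    (hq : ∀ i ∈ Finset.Icc 1 n, 0 < q i)
    (ε : ℝ) (hε : 0 < ε)
    (e : Fin (K + 1) → ℕ) (he : StrictMono e) (he0 : e 0 = 1)
    (heK : e (Fin.last K) = n + 1)
    (j : Fin K → ℕ)
    (hj : ∀ ℓ : Fin K,
      PiecewiseConstOn p (e ℓ.castSucc) (e ℓ.succ) (j ℓ) ∧
      ∀ j' < j ℓ, ¬ PiecewiseConstOn p (e ℓ.castSucc) (e ℓ.succ) j')
    (G : Finset (Fin K))
    (hG : ∀ ℓ ∈ G, chiSq (Finset.Ico (e ℓ.castSucc) (e ℓ.succ)) p q <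
        (j ℓ : ℝ) * ε ^ 2 / K) :
    ∑ ℓ ∈ G, chiSq (Finset.Ico (e ℓ.castSucc) (e ℓ.succ)) p q <
      ((K : ℝ) + k) * ε ^ 2 / K :=
  good_intervals_chiSq_bound_general n k K hK p q hhist ε hε e he he0 heK j hj G hG
end

section
/- There is an absolute constant C > 0 such that the following holds. Let ε ∈ (0,1), let n and K be positive integers, and let b ≥ C·(√(nK)/ε + K/ε²) be a real number. Let P, q, φ be nonnegative reals with q > 0, and suppose |φ − P| ≤ √(P/b), φ ≤ 3P, |q − P| ≤ √(P/b), and P ≤ max(2, 8n/b)·q. Then (φ − q)² ≤ (1/4)·q·ε²/K and φ ≤ 6·max(1, ε·√(n/K))·q. -/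
set_option maxHeartbeats 1000000


/-- Deterministic inequality behind the exclusion of non-breakpoint
intervals in the sieve.  There is an absolute constant `C > 0` such that for
`b ≥ C(√(nK)/ε + K/ε²)`, if `|φ - P| ≤ √(P/b)`, `φ ≤ 3P`, `|q - P| ≤ √(P/b)` and
`P ≤ max 2 (8n/b)·q`, then `(φ - q)² ≤ (1/4)·q·ε²/K` and
`φ ≤ 6·max 1 (ε√(n/K))·q`. -/
theorem sieve_exclusion_core :
    ∃ C : ℝ, 0 < C ∧
      ∀ (ε : ℝ) (n K : ℕ) (b P q φ : ℝ),
        0 < ε → ε < 1 → 0 < n → 0 < K →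
        C * (Real.sqrt ((n : ℝ) * K) / ε + (K : ℝ) / ε ^ 2) ≤ b →
        0 ≤ P → 0 < q → 0 ≤ φ →
        |φ - P| ≤ Real.sqrt (P / b) →
        φ ≤ 3 * P →
        |q - P| ≤ Real.sqrt (P / b) →
        P ≤ max 2 (8 * (n : ℝ) / b) * q →
        (φ - q) ^ 2 ≤ (1 / 4) * q * ε ^ 2 / K ∧
        φ ≤ 6 * max 1 (ε * Real.sqrt ((n : ℝ) / K)) * q := by
  refine ⟨32, by norm_num, ?_⟩
  intro ε n K b P q φ hε hε1 hn hK hb hP hq hφ hφP hφ3P hqP hPq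
  have hn1 : (1:ℝ) ≤ n := by exact_mod_cast hn
  have hK1 : (1:ℝ) ≤ K := by exact_mod_cast hK
  have hn0 : (0:ℝ) < n := by linarith
  have hK0 : (0:ℝ) < K := by linarith
  have hnK : (0:ℝ) < (n:ℝ) * K := by positivity
  have hsnK : 0 < Real.sqrt ((n:ℝ)*K) := Real.sqrt_pos.mpr hnK
  have hb0 : 0 < b := lt_of_lt_of_le (by positivity) hb
  have hb1 : 32 * (K:ℝ) / ε^2 ≤ b := by
    refine le_trans ?_ hb
    have : 0 ≤ Real.sqrt ((n:ℝ)*K) / ε := by positivity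
    rw [mul_add]; linarith [mul_div_assoc (32:ℝ) (K:ℝ) (ε^2)]
  have hb2 : 32 * Real.sqrt ((n:ℝ)*K) / ε ≤ b := by
    refine le_trans ?_ hb
    have : 0 ≤ (K:ℝ) / ε^2 := by positivity
    rw [mul_add]; linarith [mul_div_assoc (32:ℝ) (Real.sqrt ((n:ℝ)*K)) ε]
  -- (φ - q)^2 ≤ 4 * (P/b)
  have hs0 : (0:ℝ) ≤ P / b := by positivity
  have hdiff : |φ - q| ≤ 2 * Real.sqrt (P/b) := by
    calc |φ - q| ≤ |φ - P| + |P - q| := abs_sub_le _ _ _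
      _ ≤ Real.sqrt (P/b) + Real.sqrt (P/b) := by
          rw [abs_sub_comm P q]; linarith
      _ = 2 * Real.sqrt (P/b) := by ring
  have hsq : (φ - q)^2 ≤ 4 * (P/b) := by
    have h1 : |φ-q|^2 ≤ (2*Real.sqrt (P/b))^2 :=
      pow_le_pow_left₀ (abs_nonneg _) hdiff 2
    rw [mul_pow, Real.sq_sqrt hs0, sq_abs] at h1
    linarith
  have hbε : 32 * Real.sqrt ((n:ℝ)*K) ≤ b * ε := by
    rw [div_le_iff₀ hε] at hb2; linarith
  have hbK : 32 * (K:ℝ) ≤ b * ε^2 := by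
    rw [div_le_iff₀ (by positivity)] at hb1; linarith
  have hsqr : (Real.sqrt ((n:ℝ)*K))^2 = (n:ℝ)*K := Real.sq_sqrt hnK.le
  have hkey : P / b ≤ q * ε^2 / (16 * K) := by
    rcases le_total (8 * (n:ℝ) / b) 2 with h | h
    · have hP2 : P ≤ 2 * q := by rw [max_eq_left h] at hPq; exact hPq
      rw [div_le_div_iff₀ hb0 (by positivity)]
      nlinarith [hq.le, mul_nonneg hq.le (sq_nonneg ε)]
    · have hPn : P ≤ 8 * (n:ℝ) / b * q := by rw [max_eq_right h] at hPq; exact hPq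
      rw [div_le_div_iff₀ hb0 (by positivity)]
      rw [div_mul_eq_mul_div, le_div_iff₀ hb0] at hPn
      have hbb : 1024 * ((n:ℝ)*K) ≤ (b*ε)^2 := by nlinarith
      have hA : 16*(K:ℝ) * (P * b) ≤ 16*(K:ℝ) * (8 * (n:ℝ) * q) :=
        mul_le_mul_of_nonneg_left hPn (by positivity)
      have hB : q * (1024 * ((n:ℝ)*K)) ≤ q * (b*ε)^2 :=
        mul_le_mul_of_nonneg_left hbb hq.le
      have hC : (0:ℝ) ≤ (n:ℝ) * K * q := by positivity
      have hD : (0:ℝ) ≤ q * (b*ε)^2 := by positivity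
      have h3 : P * (16*(K:ℝ)) * b ≤ q * ε^2 * b * b := by linarith [hA, hB, hC, hD]
      exact le_of_mul_le_mul_right h3 hb0
  constructor
  · calc (φ-q)^2 ≤ 4*(P/b) := hsq
      _ ≤ 4*(q*ε^2/(16*K)) := by linarith
      _ = 1/4 * q * ε^2 / K := by ring
  · rcases le_total (8 * (n:ℝ) / b) 2 with h | h
    · have hP2 : P ≤ 2*q := by rw [max_eq_left h] at hPq; exact hPq
      have hmax : (1:ℝ) ≤ max 1 (ε * Real.sqrt ((n:ℝ)/K)) := le_max_left _ _
      nlinarith [hq.le]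
    · have hPn : P ≤ 8*(n:ℝ)/b*q := by rw [max_eq_right h] at hPq; exact hPq
      have hprod : Real.sqrt ((n:ℝ)*K) * Real.sqrt ((n:ℝ)/K) = (n:ℝ) := by
        rw [← Real.sqrt_mul hnK.le]
        have : (n:ℝ)*K*((n:ℝ)/K) = (n:ℝ)^2 := by field_simp
        rw [this, Real.sqrt_sq hn0.le]
      have hkey2 : 24 * (n:ℝ) / b ≤ 6 * (ε * Real.sqrt ((n:ℝ)/K)) := by
        rw [div_le_iff₀ hb0]
        have hs : 0 ≤ Real.sqrt ((n:ℝ)/K) := Real.sqrt_nonneg _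
        nlinarith [mul_le_mul_of_nonneg_right hbε hs]
      have hmax : ε * Real.sqrt ((n:ℝ)/K) ≤ max 1 (ε * Real.sqrt ((n:ℝ)/K)) :=
        le_max_right _ _
      have hPn' : P * b ≤ 8*(n:ℝ)*q := by
        rw [div_mul_eq_mul_div, le_div_iff₀ hb0] at hPn
        exact hPn
      rw [div_le_iff₀ hb0] at hkey2
      have h4 : φ * b ≤ 6 * (ε * Real.sqrt ((n:ℝ)/K)) * q * b := by
        nlinarith [mul_le_mul_of_nonneg_right hφ3P hb0.le,
          mul_le_mul_of_nonneg_right hkey2 hq.le]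
      have h5 : φ ≤ 6 * (ε * Real.sqrt ((n:ℝ)/K)) * q := le_of_mul_le_mul_right h4 hb0
      have h6 : (ε * Real.sqrt ((n:ℝ)/K)) * q ≤ max 1 (ε * Real.sqrt ((n:ℝ)/K)) * q :=
        mul_le_mul_of_nonneg_right hmax hq.le
      linarith
end

section
/- There is an absolute constant C > 0 such that the following holds. Let ε ∈ (0,1), let n and K be positive integers, and let b ≥ C·(√(nK)/ε + K/ε²) be a real number. Let P, q, φ be nonnegative reals with q ≥ 1/(2n), and suppose |φ − P| ≤ √(P/b) and |P − q| ≥ √(q·ε²/K). Then φ ≥ 6·max(1, ε·√(n/K))·q or |q − φ| ≥ (1/2)·√(q·ε²/K). -/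
set_option maxHeartbeats 1000000


/-- Deterministic inequality behind the detection of bad intervals in
the sieve.  There is an absolute constant `C > 0` such that for
`b ≥ C(√(nK)/ε + K/ε²)`, if `q ≥ 1/(2n)`, `|φ - P| ≤ √(P/b)` and
`|P - q| ≥ √(q·ε²/K)`, then `φ ≥ 6·max 1 (ε√(n/K))·q` or
`|q - φ| ≥ (1/2)·√(q·ε²/K)`. -/
theorem sieve_detection_core :
    ∃ C : ℝ, 0 < C ∧
      ∀ (ε : ℝ) (n K : ℕ) (b P q φ : ℝ),
        0 < ε → ε < 1 → 0 < n → 0 < K →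
        C * (Real.sqrt ((n : ℝ) * K) / ε + (K : ℝ) / ε ^ 2) ≤ b →
        0 ≤ P → 0 ≤ φ →
        1 / (2 * (n : ℝ)) ≤ q →
        |φ - P| ≤ Real.sqrt (P / b) →
        Real.sqrt (q * ε ^ 2 / K) ≤ |P - q| →
        6 * max 1 (ε * Real.sqrt ((n : ℝ) / K)) * q ≤ φ ∨
        (1 / 2) * Real.sqrt (q * ε ^ 2 / K) ≤ |q - φ| := by
  refine ⟨48, by norm_num, ?_⟩
  intro ε n K b P q φ hε hε1 hn hK hb hP0 hφ0 hq hφP hPq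
  have hnpos : (0:ℝ) < n := by exact_mod_cast hn
  have hKpos : (0:ℝ) < K := by exact_mod_cast hK
  have hq0 : 0 < q := lt_of_lt_of_le (by positivity) hq
  set T := Real.sqrt (q * ε ^ 2 / K) with hTdef
  have hT0 : 0 ≤ T := Real.sqrt_nonneg _
  have hT2 : T ^ 2 = q * ε ^ 2 / K := Real.sq_sqrt (by positivity)
  by_cases hc : Real.sqrt (P / b) ≤ T / 2
  · right
    have h1 : |P - q| ≤ |P - φ| + |φ - q| := abs_sub_le P φ q
    rw [abs_sub_comm P φ, abs_sub_comm φ q] at h1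
    linarith
  · left
    push_neg at hc
    set S := Real.sqrt ((n:ℝ) * K) with hSdef
    have hS0 : 0 ≤ S := Real.sqrt_nonneg _
    have hS2 : S ^ 2 = (n:ℝ) * K := Real.sq_sqrt (by positivity)
    have hbpos : 0 < b := lt_of_lt_of_le (by positivity) hb
    -- from the negated case: T^2/4 < P/b
    have hsq : (Real.sqrt (P / b)) ^ 2 = P / b := Real.sq_sqrt (by positivity)
    have hPb : T ^ 2 / 4 < P / b := by
      nlinarith [Real.sqrt_nonneg (P / b), hc, hT0]
    have hP' : T ^ 2 / 4 * b < P := (lt_div_iff₀ hbpos).mp hPb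
    have hPpos : 0 < P := by nlinarith [hT2, hq0, hKpos]
    -- b*ε ≥ 48*S
    have hb1 : 48 * S / ε ≤ b := by
      have hKe : 0 ≤ (K:ℝ) / ε ^ 2 := by positivity
      calc 48 * S / ε = 48 * (S / ε) := by ring
        _ ≤ 48 * (S / ε + (K:ℝ) / ε ^ 2) := by linarith
        _ ≤ b := hb
    have hbε : 48 * S ≤ b * ε := by
      rw [div_le_iff₀ hε] at hb1; linarith
    -- b^2 * ε^2 ≥ 2304 * n * K
    have hb2 : 2304 * ((n:ℝ) * K) ≤ b ^ 2 * ε ^ 2 := by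
      nlinarith [hS0, hbε, mul_le_mul hbε hbε (by positivity) (by positivity)]
    -- q ≥ 1/(2n) i.e. 1 ≤ 2 n q
    have hq' : (1:ℝ) ≤ 2 * n * q := by
      rw [div_le_iff₀ (by positivity)] at hq; linarith
    -- hence b^2 * T^2 ≥ 1152
    have hT2K : T ^ 2 * K = q * ε ^ 2 := by
      rw [hT2]; field_simp
    have h3 : 1152 ≤ b ^ 2 * T ^ 2 := by
      have ha : 2304 * ((n:ℝ) * K) * q ≤ b ^ 2 * ε ^ 2 * q :=
        mul_le_mul_of_nonneg_right hb2 hq0.le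
      have hbb : 1152 * (K:ℝ) * 1 ≤ 1152 * (K:ℝ) * (2 * n * q) :=
        mul_le_mul_of_nonneg_left hq' (by positivity)
      have h2 : 1152 * (K:ℝ) ≤ b ^ 2 * ε ^ 2 * q := by nlinarith [ha, hbb]
      have h4 : b ^ 2 * T ^ 2 * K = b ^ 2 * ε ^ 2 * q := by
        rw [show b ^ 2 * T ^ 2 * K = b ^ 2 * (T ^ 2 * K) by ring, hT2K]; ring
      nlinarith [h2, h4, hKpos]
    -- so P * b ≥ 4
    have hPb4 : 4 ≤ P * b := by nlinarith [hP', hbpos, h3]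
    -- hence sqrt(P/b) ≤ P/2
    have hdiv : P / b ≤ (P / 2) ^ 2 := by
      rw [div_le_iff₀ hbpos]; nlinarith [hPb4, hPpos]
    have hs : Real.sqrt (P / b) ≤ P / 2 := by
      calc Real.sqrt (P / b) ≤ Real.sqrt ((P / 2) ^ 2) := Real.sqrt_le_sqrt hdiv
        _ = P / 2 := Real.sqrt_sq (by positivity)
    -- φ ≥ P/2
    have hφ2 : P / 2 ≤ φ := by
      have := (abs_le.mp hφP).1
      linarith
    -- sqrt(n/K) = S/K
    have hSK : Real.sqrt ((n:ℝ) / K) = S / K := by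
      have hnk : (n:ℝ) * K = ((n:ℝ) / K) * K ^ 2 := by field_simp
      rw [hSdef, hnk, Real.sqrt_mul (by positivity), Real.sqrt_sq hKpos.le]
      field_simp
    rw [hSK]
    -- P ≥ 12 q (1 + ε S / K)
    have key : (q * ε ^ 2 / K) / 4 * (48 * (S / ε + (K:ℝ) / ε ^ 2)) =
        12 * q * (1 + ε * S / K) := by
      field_simp; ring
    have hP12 : 12 * q * (1 + ε * S / K) ≤ P := by
      have hpos : (0:ℝ) ≤ (q * ε ^ 2 / K) / 4 := by positivity
      have := mul_le_mul_of_nonneg_left hb hpos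
      rw [key] at this
      nlinarith [hP', hT2]
    -- conclude
    have hmax : max 1 (ε * (S / K)) ≤ 1 + ε * S / K := by
      have h0 : 0 ≤ ε * S / K := by positivity
      apply max_le
      · linarith
      · rw [mul_div_assoc] at h0 ⊢; linarith
    have hfin : max 1 (ε * (S / K)) * q ≤ (1 + ε * S / K) * q :=
      mul_le_mul_of_nonneg_right hmax hq0.le
    nlinarith [hφ2, hP12, hfin]
end

section
/- Let a and b be two distinct real numbers, and let V₁, …, V_n be i.i.d. random variables with Pr[V₁ = a] ≥ 1/3 and Pr[V₁ = b] ≥ 1/3. Let N := #{1 ≤ i ≤ n−1 : V_i = a and V_{i+1} = b}. Then E[N] ≥ (n−1)/9 and Var[N] ≤ n, and there is an absolute constant n₀ such that for all n ≥ n₀, Pr[N ≥ n/10] ≥ 99/100. -/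
/-!
`N` is the sum of the indicators of the events `S i = {V i = a, V (i + 1) = b}`, each of
probability `p q ≥ 1/9`, which gives the mean. Consecutive events `S i`, `S (i + 1)` are disjoint
since `a ≠ b`, and events at distance at least two are independent, so all off-diagonal
covariances are `≤ 0` and `Var N ≤ ∑ P(S i) (1 - P(S i)) ≤ n`. Since `E N - n/10 ≥ (n - 10)/90`,
Chebyshev's inequality gives the tail bound once `n` is large.
-/

open MeasureTheory ProbabilityTheory Finset
open scoped Classical

section IndicatorSums

variable {Ω ι : Type*} [MeasurableSpace Ω] {P : Measure Ω}

lemma memLp_indicator_one [IsFiniteMeasure P] (p : ENNReal) {A : Set Ω} (hA : MeasurableSet A) :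
    MemLp (A.indicator (1 : Ω → ℝ)) p P :=
  (memLp_const 1).indicator hA

lemma integral_sum_indicator_one [IsFiniteMeasure P] {s : Finset ι} {S : ι → Set Ω}
    (hS : ∀ i, MeasurableSet (S i)) :
    ∫ ω, ∑ i ∈ s, (S i).indicator 1 ω ∂P = ∑ i ∈ s, P.real (S i) := by
  rw [integral_finsetSum _ fun i _ => (integrable_const 1).indicator (hS i)]
  exact sum_congr rfl fun i _ => integral_indicator_one (hS i)

variable [IsProbabilityMeasure P]

lemma covariance_indicator_one {A B : Set Ω} (hA : MeasurableSet A) (hB : MeasurableSet B) :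
    cov[A.indicator 1, B.indicator 1; P] = P.real (A ∩ B) - P.real A * P.real B := by
  rw [covariance_eq_sub (memLp_indicator_one 2 hA) (memLp_indicator_one 2 hB),
    ← Set.inter_indicator_one, integral_indicator_one (hA.inter hB), integral_indicator_one hA,
    integral_indicator_one hB]

lemma variance_sum_indicator_one_le {s : Finset ι} {S : ι → Set Ω}
    (hS : ∀ i, MeasurableSet (S i))
    (hcorr : ∀ i ∈ s, ∀ j ∈ s, i ≠ j → P.real (S i ∩ S j) ≤ P.real (S i) * P.real (S j)) :
    Var[fun ω => ∑ i ∈ s, (S i).indicator 1 ω; P] ≤ ∑ i ∈ s, (P.real (S i) - P.real (S i) ^ 2) := by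
  rw [variance_fun_sum' fun i _ => memLp_indicator_one 2 (hS i)]
  refine sum_le_sum fun i hi => ?_
  calc ∑ j ∈ s, cov[(S i).indicator 1, (S j).indicator 1; P]
      ≤ ∑ j ∈ s, if i = j then P.real (S i) - P.real (S i) ^ 2 else 0 := by
        refine sum_le_sum fun j hj => ?_
        rw [covariance_indicator_one (hS i) (hS j)]
        split_ifs with hij
        · rw [hij, Set.inter_self, sq]
        · exact sub_nonpos.mpr (hcorr i hi j hj hij)
    _ = P.real (S i) - P.real (S i) ^ 2 := by rw [sum_ite_eq, if_pos hi]

lemma ofReal_one_sub_le_measure_ge_of_variance {X : Ω → ℝ} (hX : MemLp X 2 P) {t ε : ℝ}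
    (ht : t < P[X]) (hε : Var[X; P] / (P[X] - t) ^ 2 ≤ ε) :
    ENNReal.ofReal (1 - ε) ≤ P {ω | t ≤ X ω} := by
  have hε0 : 0 ≤ ε := (div_nonneg (variance_nonneg X P) (sq_nonneg _)).trans hε
  have htail : P {ω | t ≤ X ω}ᶜ ≤ ENNReal.ofReal ε := by
    refine (measure_mono fun ω hω => ?_).trans
      ((meas_ge_le_variance_div_sq hX (sub_pos.mpr ht)).trans (ENNReal.ofReal_le_ofReal hε))
    simp only [Set.mem_compl_iff, Set.mem_ofPred_eq, not_le] at hω ⊢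
    rw [abs_sub_comm]
    exact (sub_le_sub_left hω.le _).trans (le_abs_self _)
  have hcover : 1 ≤ P {ω | t ≤ X ω} + P {ω | t ≤ X ω}ᶜ := by
    rw [← measure_univ (μ := P), ← Set.union_compl_self {ω | t ≤ X ω}]
    exact measure_union_le _ _
  rw [ENNReal.ofReal_sub _ hε0, ENNReal.ofReal_one, tsub_le_iff_right]
  exact hcover.trans (add_le_add_right htail _)

end IndicatorSums

section BorderPairs

variable {Ω β : Type*} {V : ℕ → Ω → β} {a b : β} {n i j : ℕ}

def borderPairAt (V : ℕ → Ω → β) (a b : β) (i : ℕ) : Set Ω :=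
  V i ⁻¹' {a} ∩ V (i + 1) ⁻¹' {b}

lemma borderPairAt_inter_succ (hab : a ≠ b) (i : ℕ) :
    borderPairAt V a b i ∩ borderPairAt V a b (i + 1) = ∅ :=
  Set.eq_empty_of_forall_notMem fun _ ⟨⟨_, hb⟩, ha, _⟩ => hab (ha.symm.trans hb)

lemma borderPairAt_eq_preimage_prod (i : ℕ) :
    borderPairAt V a b i = (fun ω => (V i ω, V (i + 1) ω)) ⁻¹' ({a} ×ˢ {b}) := rfl

variable [MeasurableSpace Ω] [MeasurableSpace β] [MeasurableSingletonClass β] {P : Measure Ω}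

lemma measurableSet_borderPairAt (hV : ∀ i, Measurable (V i)) (i : ℕ) :
    MeasurableSet (borderPairAt V a b i) :=
  (hV i (measurableSet_singleton a)).inter (hV (i + 1) (measurableSet_singleton b))

lemma measureReal_borderPairAt (hV : ∀ i, Measurable (V i))
    (hindep : iIndepFun (fun i : Fin n => V i) P)
    (hident : ∀ i : Fin n, P.map (V i) = P.map (V 0)) (hi : i + 1 < n) :
    P.real (borderPairAt V a b i) = P.real (V 0 ⁻¹' {a}) * P.real (V 0 ⁻¹' {b}) := by
  have hsame (k : Fin n) (c : β) : P.real (V k ⁻¹' {c}) = P.real (V 0 ⁻¹' {c}) := by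
    rw [← map_measureReal_apply (hV k) (measurableSet_singleton c), hident k,
      map_measureReal_apply (hV 0) (measurableSet_singleton c)]
  have hpair := hindep.indepFun (i := ⟨i, by omega⟩) (j := ⟨i + 1, hi⟩) (by simp)
  rw [borderPairAt, measureReal_def, hpair.measure_inter_preimage_eq_mul _ _
    (measurableSet_singleton a) (measurableSet_singleton b), ENNReal.toReal_mul,
    ← measureReal_def, ← measureReal_def, hsame ⟨i, by omega⟩, hsame ⟨i + 1, hi⟩]

lemma measureReal_borderPairAt_inter_of_succ_lt (hV : ∀ i, Measurable (V i))
    (hindep : iIndepFun (fun i : Fin n => V i) P) (hij : i + 1 < j) (hj : j + 1 < n) :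
    P.real (borderPairAt V a b i ∩ borderPairAt V a b j) =
      P.real (borderPairAt V a b i) * P.real (borderPairAt V a b j) := by
  have hpairs := hindep.indepFun_prodMk_prodMk (fun k => hV k)
    ⟨i, by omega⟩ ⟨i + 1, by omega⟩ ⟨j, by omega⟩ ⟨j + 1, hj⟩
    (by simp; omega) (by simp; omega) (by simp; omega) (by simp; omega)
  have hab := (measurableSet_singleton a).prod (measurableSet_singleton b)
  simp only [measureReal_def, borderPairAt_eq_preimage_prod,
    hpairs.measure_inter_preimage_eq_mul _ _ hab hab, ENNReal.toReal_mul]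

lemma measureReal_borderPairAt_inter_le (hV : ∀ i, Measurable (V i))
    (hindep : iIndepFun (fun i : Fin n => V i) P) (hab : a ≠ b) (hij : i ≠ j)
    (hi : i + 1 < n) (hj : j + 1 < n) :
    P.real (borderPairAt V a b i ∩ borderPairAt V a b j) ≤
      P.real (borderPairAt V a b i) * P.real (borderPairAt V a b j) := by
  wlog hlt : i < j generalizing i j
  · rw [Set.inter_comm, mul_comm]
    exact this hij.symm hj hi (by omega)
  obtain rfl | hsucc := (Nat.succ_le_of_lt hlt).eq_or_lt
  · rw [borderPairAt_inter_succ hab, measureReal_empty]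
    positivity
  · exact (measureReal_borderPairAt_inter_of_succ_lt hV hindep hsucc hj).le

end BorderPairs

section BorderPairCount

variable {Ω β : Type*} [MeasurableSpace Ω] [MeasurableSpace β] [MeasurableSingletonClass β]
  {P : Measure Ω} [IsProbabilityMeasure P] {V : ℕ → Ω → β} {a b : β} {n : ℕ}

lemma integral_sum_indicator_borderPairAt (hV : ∀ i, Measurable (V i))
    (hindep : iIndepFun (fun i : Fin n => V i) P)
    (hident : ∀ i : Fin n, P.map (V i) = P.map (V 0)) :
    ∫ ω, ∑ i ∈ range (n - 1), (borderPairAt V a b i).indicator 1 ω ∂P =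
      (n - 1 : ℕ) * (P.real (V 0 ⁻¹' {a}) * P.real (V 0 ⁻¹' {b})) := by
  rw [integral_sum_indicator_one (measurableSet_borderPairAt hV),
    sum_congr rfl fun i hi => measureReal_borderPairAt hV hindep hident (by simp at hi; omega),
    sum_const, card_range, nsmul_eq_mul]

lemma variance_sum_indicator_borderPairAt_le (hV : ∀ i, Measurable (V i))
    (hindep : iIndepFun (fun i : Fin n => V i) P) (hab : a ≠ b) :
    Var[fun ω => ∑ i ∈ range (n - 1), (borderPairAt V a b i).indicator 1 ω; P] ≤ (n - 1 : ℕ) := by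
  refine (variance_sum_indicator_one_le (measurableSet_borderPairAt hV)
    fun i hi j hj hij => measureReal_borderPairAt_inter_le hV hindep hab hij
      (by simp at hi; omega) (by simp at hj; omega)).trans ?_
  calc ∑ i ∈ range (n - 1), (P.real (borderPairAt V a b i) - P.real (borderPairAt V a b i) ^ 2)
      ≤ ∑ i ∈ range (n - 1), (1 : ℝ) :=
        sum_le_sum fun i _ => by nlinarith [measureReal_le_one (μ := P) (s := borderPairAt V a b i)]
    _ = (n - 1 : ℕ) := by simp

end BorderPairCount

/-- Let `V 0, …, V (n-1)` be i.i.d. real random variables with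
`Pr[V 0 = a] ≥ 1/3` and `Pr[V 0 = b] ≥ 1/3`, where `a ≠ b`, and let
`N = #{0 ≤ i < n - 1 : V i = a ∧ V (i+1) = b}` count the 'right border pairs'.
Then `E[N] ≥ (n-1)/9`, `Var[N] ≤ n`, and there is an absolute constant `n₀` such
that for `n ≥ n₀` we have `Pr[N ≥ n/10] ≥ 99/100`. -/
theorem border_pairs_count :
    ∃ n₀ : ℕ,
      ∀ (n : ℕ) (a b : ℝ), 0 < n → a ≠ b →
        ∀ (Ω : Type) (mΩ : MeasurableSpace Ω) (P : Measure Ω),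
          IsProbabilityMeasure P →
          ∀ V : ℕ → Ω → ℝ,
            (∀ i, Measurable (V i)) →
            iIndepFun (fun i : Fin n => V (i : ℕ)) P →
            (∀ i : Fin n, Measure.map (V (i : ℕ)) P = Measure.map (V 0) P) →
            ENNReal.ofReal (1 / 3) ≤ P {ω | V 0 ω = a} →
            ENNReal.ofReal (1 / 3) ≤ P {ω | V 0 ω = b} →
            ∀ N : Ω → ℕ,
              (∀ ω, N ω =
                ((Finset.range (n - 1)).filter
                  (fun i => V i ω = a ∧ V (i + 1) ω = b)).card) →
              ((n : ℝ) - 1) / 9 ≤ (∫ ω, (N ω : ℝ) ∂P) ∧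
              variance (fun ω => (N ω : ℝ)) P ≤ (n : ℝ) ∧
              (n₀ ≤ n →
                ENNReal.ofReal (99 / 100) ≤ P {ω | (n : ℝ) / 10 ≤ (N ω : ℝ)}) := by
  -- `Var N / (E N - n/10) ^ 2 ≤ n / ((n - 10)/90) ^ 2`, which is `≤ 1/100` from `n ≈ 8.1 · 10^5` on.
  refine ⟨10 ^ 6, fun n a b hn hab Ω _ P _ V hV hindep hident ha hb N hN => ?_⟩
  have hN_eq : (fun ω => (N ω : ℝ)) =
      fun ω => ∑ i ∈ range (n - 1), (borderPairAt V a b i).indicator 1 ω := by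
    ext ω
    rw [hN ω, natCast_card_filter]
    exact sum_congr rfl fun i _ => by rw [Set.indicator_apply]; simp [borderPairAt]
  have hp : 1 / 3 ≤ P.real (V 0 ⁻¹' {a}) :=
    (ENNReal.ofReal_le_iff_le_toReal (measure_ne_top _ _)).mp ha
  have hq : 1 / 3 ≤ P.real (V 0 ⁻¹' {b}) :=
    (ENNReal.ofReal_le_iff_le_toReal (measure_ne_top _ _)).mp hb
  have hn_sub : ((n - 1 : ℕ) : ℝ) = n - 1 := by rw [Nat.cast_sub hn, Nat.cast_one]
  have hmean : ((n : ℝ) - 1) / 9 ≤ P[fun ω => (N ω : ℝ)] := by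
    rw [hN_eq, integral_sum_indicator_borderPairAt hV hindep hident, hn_sub]
    have hn1 : (1 : ℝ) ≤ n := by exact_mod_cast hn
    nlinarith [mul_le_mul hp hq (by norm_num) (by linarith)]
  have hvar : Var[fun ω => (N ω : ℝ); P] ≤ n := by
    rw [hN_eq]
    exact (variance_sum_indicator_borderPairAt_le hV hindep hab).trans (by rw [hn_sub]; linarith)
  refine ⟨hmean, hvar, fun hn₀ => ?_⟩
  have hn₀ : (10 ^ 6 : ℝ) ≤ n := by exact_mod_cast hn₀
  have hmemLp : MemLp (fun ω => (N ω : ℝ)) 2 P := by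
    rw [hN_eq]
    exact memLp_finsetSum _ fun i _ => memLp_indicator_one 2 (measurableSet_borderPairAt hV i)
  have hgap : ((n : ℝ) - 10) / 90 ≤ P[fun ω => (N ω : ℝ)] - n / 10 := by linarith
  convert ofReal_one_sub_le_measure_ge_of_variance hmemLp (t := n / 10) (ε := 1 / 100)
    (by linarith) ?_ using 2
  · norm_num
  rw [div_le_iff₀ (by nlinarith)]
  nlinarith
end
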